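/- Let ℓ ≥ 1, let 1 ≤ r ≤ ℓ, let H be an ℓ×ℓ complex Hermitian matrix, and let a, b be real numbers with 0 < a ≤ b such that a·‖x‖² ≤ ⟨Hx, x⟩ ≤ b·‖x‖² for every x ∈ ℂ^ℓ. Then the r-th compound matrix C_r(H) is Hermitian and satisfies a^r·‖ξ‖² ≤ ⟨C_r(H)ξ, ξ⟩ ≤ b^r·‖ξ‖² for every vector ξ indexed by the r-element subsets of {1,…,ℓ}. -/

import Mathlib

open Matrix

/-- The `r`-th compound matrix of an `ℓ×ℓ` complex matrix `A`: the matrix indexed by the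
`r`-element subsets of `{1,…,ℓ}` (each listed in increasing order) whose `(I,J)` entry is the
determinant of the `r×r` submatrix of `A` with rows indexed by `I` and columns indexed by `J`. -/
def compound {ℓ : ℕ} (r : ℕ) (A : Matrix (Fin ℓ) (Fin ℓ) ℂ) :
    Matrix {s : Finset (Fin ℓ) // s.card = r} {s : Finset (Fin ℓ) // s.card = r} ℂ :=
  fun I J => (A.submatrix
    (fun i => ((I.1.orderIsoOfFin I.2) i : Fin ℓ))
    (fun j => ((J.1.orderIsoOfFin J.2) j : Fin ℓ))).det

/-- The Hermitian quadratic form `⟨Mx, x⟩ = Σᵢ conj(xᵢ)·(Mx)ᵢ` (real part). -/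
noncomputable def hermQF {n : Type*} [Fintype n] (M : Matrix n n ℂ) (x : n → ℂ) : ℝ :=
  (dotProduct (star x) (M.mulVec x)).re

/-- The squared norm `‖x‖² = Σᵢ |xᵢ|²` of a complex vector. -/
noncomputable def normSq' {n : Type*} [Fintype n] (x : n → ℂ) : ℝ :=
  ∑ i, ‖x i‖ ^ 2

/-!
Cauchy–Binet makes `compound r` multiplicative, and it commutes with `ᴴ`. Hence it carries a
unitary diagonalisation `H = U diag(λ) Uᴴ` to the unitary diagonalisation
`C_r(H) = C_r(U) diag(∏_{i ∈ I} λ_i) C_r(U)ᴴ`. Testing the form bounds on unit eigenvectors puts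
every `λ_i` in `[a, b]`, so every `∏_{i ∈ I} λ_i` lies in `[a^r, b^r]`, and conjugating a diagonal
form by a unitary matrix preserves its bounds.
-/

open Finset Equiv Function

section CauchyBinet

variable {R α : Type*} [CommRing R] [Fintype α] {r : ℕ}

-- An injective `f` factors uniquely as the increasing enumeration of its image after a
-- permutation, namely the inverse of the permutation `Tuple.sort f` that sorts it.
theorem Finset.sum_filter_injective_eq_sum_orderEmbOfFin_perm [LinearOrder α] {β : Type*}
    [AddCommMonoid β] (g : (Fin r → α) → β) :
    ∑ f with Injective f, g f = ∑ s : {s : Finset α // s.card = r}, ∑ τ : Perm (Fin r),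
      g (fun i => s.1.orderEmbOfFin s.2 (τ i)) := by
  rw [← sum_product']
  refine (sum_bij (fun p _ => p.1.1.orderEmbOfFin p.1.2 ∘ p.2) ?_ ?_ ?_ fun _ _ => rfl).symm
  · intro p _
    simpa using (p.1.1.orderEmbOfFin p.1.2).injective.comp p.2.injective
  · rintro ⟨⟨s₁, hs₁⟩, τ₁⟩ - ⟨⟨s₂, hs₂⟩, τ₂⟩ - h
    have hs : s₁ = s₂ := by
      have := congrArg Set.range h
      simp only [Set.range_comp, τ₁.surjective.range_eq, τ₂.surjective.range_eq, Set.image_univ,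
        range_orderEmbOfFin] at this
      exact_mod_cast this
    subst hs
    have hτ : τ₁ = τ₂ := Equiv.ext fun i => (s₁.orderEmbOfFin hs₁).injective (congrFun h i)
    rw [hτ]
  · intro f hf
    have hinj : Injective f := (mem_filter.mp hf).2
    have hcard : (univ.image f).card = r := by simp [card_image_of_injective _ hinj]
    have hsorted : f ∘ Tuple.sort f = (univ.image f).orderEmbOfFin hcard :=
      orderEmbOfFin_unique hcard (fun i => by simp)
        ((Tuple.monotone_sort f).strictMono_of_injective (hinj.comp (Tuple.sort f).injective))
    refine ⟨(⟨univ.image f, hcard⟩, (Tuple.sort f).symm), mem_univ _, ?_⟩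
    simp [← hsorted, comp_assoc]

theorem Matrix.det_mul_eq_sum_prod_mul_det_submatrix [DecidableEq α] (M : Matrix (Fin r) α R)
    (N : Matrix α (Fin r) R) :
    det (M * N) = ∑ f : Fin r → α, (∏ i, N (f i) i) * det (M.submatrix id f) := by
  have hexpand : det (M * N) = ∑ f : Fin r → α, ∑ σ : Perm (Fin r),
      (Perm.sign σ : R) * ∏ i, M (σ i) (f i) * N (f i) i := by
    simp only [det_apply', mul_apply, prod_univ_sum, mul_sum, Fintype.piFinset_univ]
    rw [sum_comm]
  rw [hexpand]
  refine sum_congr rfl fun f _ => ?_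
  rw [det_apply', mul_sum]
  refine sum_congr rfl fun σ _ => ?_
  simp only [submatrix_apply, id_eq, prod_mul_distrib]
  ring

theorem Matrix.det_mul_eq_sum_det_submatrix_mul_det_submatrix [LinearOrder α]
    (M : Matrix (Fin r) α R) (N : Matrix α (Fin r) R) :
    det (M * N) = ∑ s : {s : Finset α // s.card = r},
      det (M.submatrix id (s.1.orderEmbOfFin s.2)) *
        det (N.submatrix (s.1.orderEmbOfFin s.2) id) := by
  have hnoninj : ∀ f : Fin r → α, ¬ Injective f → det (M.submatrix id f) = 0 := by
    intro f hf
    obtain ⟨i, j, hfij, hij⟩ := not_injective_iff.mp hf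
    exact det_zero_of_column_eq hij fun k => by simp [hfij]
  rw [det_mul_eq_sum_prod_mul_det_submatrix, ← sum_filter_of_ne fun f _ h =>
      not_not.mp fun hf => h (by rw [hnoninj f hf, mul_zero]),
    sum_filter_injective_eq_sum_orderEmbOfFin_perm]
  refine sum_congr rfl fun s _ => ?_
  generalize (s.1.orderEmbOfFin s.2 : Fin r → α) = e
  have hpermute (τ : Perm (Fin r)) :
      det (M.submatrix id fun i => e (τ i)) = Perm.sign τ * det (M.submatrix id e) :=
    det_permute' τ (M.submatrix id e)
  simp only [hpermute, det_apply' (N.submatrix e id), mul_sum]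
  refine sum_congr rfl fun τ _ => ?_
  simp only [submatrix_apply, id_eq]
  ring

end CauchyBinet

section Compound

variable {ℓ : ℕ} (r : ℕ)

theorem compound_apply (A : Matrix (Fin ℓ) (Fin ℓ) ℂ)
    (I J : {s : Finset (Fin ℓ) // s.card = r}) :
    compound r A I J = det (A.submatrix (I.1.orderEmbOfFin I.2) (J.1.orderEmbOfFin J.2)) :=
  rfl

theorem compound_conjTranspose (A : Matrix (Fin ℓ) (Fin ℓ) ℂ) :
    compound r Aᴴ = (compound r A)ᴴ := by
  ext I J
  rw [compound_apply, conjTranspose_apply, compound_apply, ← det_conjTranspose]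
  rfl

theorem compound_diagonal (d : Fin ℓ → ℂ) :
    compound r (diagonal d) =
      diagonal fun I : {s : Finset (Fin ℓ) // s.card = r} => ∏ i ∈ I.1, d i := by
  ext I J
  rw [compound_apply]
  obtain rfl | hIJ := eq_or_ne I J
  · rw [diagonal_apply_eq, submatrix_diagonal _ _ (orderEmbOfFin I.1 I.2).injective,
      det_diagonal]
    conv_rhs => rw [← map_orderEmbOfFin_univ I.1 I.2, prod_map]
    rfl
  · obtain ⟨x, hxI, hxJ⟩ := not_subset.mp fun hsub =>
      hIJ (Subtype.ext (eq_of_subset_of_card_le hsub (by rw [I.2, J.2])))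
    obtain ⟨i, rfl⟩ : x ∈ Set.range (I.1.orderEmbOfFin I.2) := by
      rwa [range_orderEmbOfFin]
    rw [diagonal_apply_ne _ hIJ]
    refine det_eq_zero_of_row_eq_zero i fun j => diagonal_apply_ne _ fun h => hxJ ?_
    exact h ▸ orderEmbOfFin_mem J.1 J.2 j

theorem compound_one : compound r (1 : Matrix (Fin ℓ) (Fin ℓ) ℂ) = 1 := by
  rw [← diagonal_one, compound_diagonal]
  simp

theorem compound_mul (A B : Matrix (Fin ℓ) (Fin ℓ) ℂ) :
    compound r (A * B) = compound r A * compound r B := by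
  ext I J
  rw [compound_apply, submatrix_mul _ _ _ id _ bijective_id,
    det_mul_eq_sum_det_submatrix_mul_det_submatrix, mul_apply]
  rfl

theorem compound_mul_conjTranspose_self {U : Matrix (Fin ℓ) (Fin ℓ) ℂ} (hU : U * Uᴴ = 1) :
    compound r U * (compound r U)ᴴ = 1 := by
  rw [← compound_conjTranspose, ← compound_mul, hU, compound_one]

theorem isHermitian_compound {H : Matrix (Fin ℓ) (Fin ℓ) ℂ} (hH : H.IsHermitian) :
    (compound r H).IsHermitian := by
  rw [IsHermitian, ← compound_conjTranspose, hH.eq]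

theorem Matrix.IsHermitian.compound_eq_mul_diagonal_mul_conjTranspose
    {H : Matrix (Fin ℓ) (Fin ℓ) ℂ} (hH : H.IsHermitian) :
    compound r H = compound r hH.eigenvectorUnitary *
      diagonal (fun I : {s : Finset (Fin ℓ) // s.card = r} =>
        ((∏ i ∈ I.1, hH.eigenvalues i : ℝ) : ℂ)) * (compound r hH.eigenvectorUnitary)ᴴ := by
  conv_lhs => rw [hH.spectral_theorem]
  rw [Unitary.conjStarAlgAut_apply, compound_mul, compound_mul, compound_diagonal,
    star_eq_conjTranspose, compound_conjTranspose]
  push_cast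
  rfl

end Compound

theorem Finset.prod_mem_Icc_pow_card {ι R : Type*} [CommMonoidWithZero R] [Preorder R]
    [ZeroLEOneClass R] [PosMulMono R] (s : Finset ι) {f : ι → R} {a b : R} (ha : 0 ≤ a)
    (hf : ∀ i ∈ s, f i ∈ Set.Icc a b) :
    ∏ i ∈ s, f i ∈ Set.Icc (a ^ s.card) (b ^ s.card) := by
  rw [← prod_const, ← prod_const]
  exact ⟨prod_le_prod (fun _ _ => ha) fun i hi => (hf i hi).1,
    prod_le_prod (fun i hi => ha.trans (hf i hi).1) fun i hi => (hf i hi).2⟩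

section QuadraticForm

variable {m n : Type*} [Fintype m] [Fintype n]

def HasFormBounds (a b : ℝ) (M : Matrix n n ℂ) : Prop :=
  ∀ x : n → ℂ, a * normSq' x ≤ hermQF M x ∧ hermQF M x ≤ b * normSq' x

theorem hermQF_mul_mul_conjTranspose (V : Matrix m n ℂ) (D : Matrix n n ℂ) (x : m → ℂ) :
    hermQF (V * D * Vᴴ) x = hermQF D (Vᴴ *ᵥ x) := by
  rw [hermQF, hermQF, ← mulVec_mulVec, ← mulVec_mulVec, dotProduct_mulVec, star_mulVec,
    conjTranspose_conjTranspose]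

theorem hermQF_diagonal [DecidableEq n] (d : n → ℝ) (x : n → ℂ) :
    hermQF (diagonal fun i => (d i : ℂ)) x = ∑ i, d i * ‖x i‖ ^ 2 := by
  simp only [hermQF, mulVec_diagonal, dotProduct, Pi.star_apply, Complex.re_sum]
  refine sum_congr rfl fun i _ => ?_
  rw [Complex.star_def, mul_left_comm, Complex.conj_mul', ← Complex.ofReal_pow,
    ← Complex.ofReal_mul, Complex.ofReal_re]

theorem normSq'_eq_hermQF_one [DecidableEq n] (x : n → ℂ) : normSq' x = hermQF 1 x := by
  simpa [normSq'] using (hermQF_diagonal (fun _ => 1) x).symm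

theorem normSq'_conjTranspose_mulVec [DecidableEq m] [DecidableEq n] {V : Matrix m n ℂ}
    (hV : V * Vᴴ = 1) (x : m → ℂ) : normSq' (Vᴴ *ᵥ x) = normSq' x := by
  rw [normSq'_eq_hermQF_one, normSq'_eq_hermQF_one, ← hermQF_mul_mul_conjTranspose,
    Matrix.mul_one, hV]

theorem HasFormBounds.mul_mul_conjTranspose [DecidableEq m] [DecidableEq n] {a b : ℝ}
    {D : Matrix n n ℂ} (hD : HasFormBounds a b D) {V : Matrix m n ℂ} (hV : V * Vᴴ = 1) :
    HasFormBounds a b (V * D * Vᴴ) := fun x => by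
  rw [hermQF_mul_mul_conjTranspose, ← normSq'_conjTranspose_mulVec hV x]
  exact hD _

theorem hasFormBounds_diagonal [DecidableEq n] {a b : ℝ} {d : n → ℝ}
    (hd : ∀ i, d i ∈ Set.Icc a b) :
    HasFormBounds a b (diagonal fun i => (d i : ℂ)) := fun x => by
  rw [hermQF_diagonal, normSq', mul_sum, mul_sum]
  exact ⟨sum_le_sum fun i _ => mul_le_mul_of_nonneg_right (hd i).1 (sq_nonneg _),
    sum_le_sum fun i _ => mul_le_mul_of_nonneg_right (hd i).2 (sq_nonneg _)⟩

theorem Matrix.IsHermitian.eigenvalues_mem_Icc [DecidableEq n] {H : Matrix n n ℂ}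
    (hH : H.IsHermitian) {a b : ℝ} (hHab : HasFormBounds a b H) (i : n) :
    hH.eigenvalues i ∈ Set.Icc a b := by
  have hunit : normSq' (hH.eigenvectorBasis i : n → ℂ) = 1 := by
    rw [normSq', ← EuclideanSpace.norm_sq_eq, hH.eigenvectorBasis.orthonormal.1 i, one_pow]
  have h := hHab (hH.eigenvectorBasis i)
  rwa [hunit, mul_one, mul_one, hermQF, ← RCLike.re_to_complex, ← hH.eigenvalues_eq] at h

end QuadraticForm

theorem compound_hermitian_bounds_general (ℓ r : ℕ)
    (H : Matrix (Fin ℓ) (Fin ℓ) ℂ) (hH : H.IsHermitian)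
    (a b : ℝ) (ha : 0 < a)
    (hbound : ∀ x : Fin ℓ → ℂ, a * normSq' x ≤ hermQF H x ∧ hermQF H x ≤ b * normSq' x) :
    (compound r H).IsHermitian ∧
      ∀ ξ : {s : Finset (Fin ℓ) // s.card = r} → ℂ,
        a ^ r * normSq' ξ ≤ hermQF (compound r H) ξ ∧
        hermQF (compound r H) ξ ≤ b ^ r * normSq' ξ := by
  have hprod (I : {s : Finset (Fin ℓ) // s.card = r}) :
      ∏ i ∈ I.1, hH.eigenvalues i ∈ Set.Icc (a ^ r) (b ^ r) := by
    simpa only [I.2] using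
      I.1.prod_mem_Icc_pow_card ha.le fun i _ => hH.eigenvalues_mem_Icc hbound i
  refine ⟨isHermitian_compound r hH, ?_⟩
  rw [hH.compound_eq_mul_diagonal_mul_conjTranspose r]
  exact (hasFormBounds_diagonal hprod).mul_mul_conjTranspose
    (compound_mul_conjTranspose_self r (Unitary.coe_mul_star_self _))

/-- If `H` is an `ℓ×ℓ` Hermitian matrix with `a·‖x‖² ≤ ⟨Hx,x⟩ ≤ b·‖x‖²` for `0 < a ≤ b`, then the
`r`-th compound matrix `C_r(H)` is Hermitian and satisfies
`a^r·‖ξ‖² ≤ ⟨C_r(H)ξ,ξ⟩ ≤ b^r·‖ξ‖²`. -/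
theorem compound_hermitian_bounds (ℓ r : ℕ) (hℓ : 1 ≤ ℓ) (hr1 : 1 ≤ r) (hr : r ≤ ℓ)
    (H : Matrix (Fin ℓ) (Fin ℓ) ℂ) (hH : H.IsHermitian)
    (a b : ℝ) (ha : 0 < a) (hab : a ≤ b)
    (hbound : ∀ x : Fin ℓ → ℂ, a * normSq' x ≤ hermQF H x ∧ hermQF H x ≤ b * normSq' x) :
    (compound r H).IsHermitian ∧
      ∀ ξ : {s : Finset (Fin ℓ) // s.card = r} → ℂ,
        a ^ r * normSq' ξ ≤ hermQF (compound r H) ξ ∧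
        hermQF (compound r H) ξ ≤ b ^ r * normSq' ξ :=
  compound_hermitian_bounds_general ℓ r H hH a b ha hbound
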